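/- arXiv:2208.11851 — 2 statements merged into one kernel-verified Lean document; each statement's English description precedes it below -/
import Mathlib

section
/- For every pair of subsets X, Y of U there exists a subset Z of U with R₋(Z) = R₋(X) ∪ R₋(Y) and R⁻(Z) = R⁻(X) ∪ R⁻(Y); consequently the pair (R₋(X) ∪ R₋(Y), R⁻(X) ∪ R⁻(Y)) belongs to T and is the least upper bound of RS(X) and RS(Y) in T. -/
/-- Lower approximation: `R₋(X) = {x ∈ U | [x]_R ⊆ X}`. -/
def lowerApprox {U : Type*} (R : Setoid U) (X : Set U) : Set U :=
  {x | {y | R.r x y} ⊆ X}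

/-- Upper approximation: `R⁻(X) = {x ∈ U | [x]_R ∩ X ≠ ∅}`. -/
def upperApprox {U : Type*} (R : Setoid U) (X : Set U) : Set U :=
  {x | ({y | R.r x y} ∩ X) ≠ ∅}

/-- Rough set `RS(X) = (R₋(X), R⁻(X))`. -/
def RS {U : Type*} (R : Setoid U) (X : Set U) : Set U × Set U :=
  (lowerApprox R X, upperApprox R X)

/-- `T = {RS(X) | X ⊆ U}`. -/
def RoughT {U : Type*} (R : Setoid U) : Set (Set U × Set U) :=
  {p | ∃ X : Set U, p = RS R X}

/-- Componentwise inclusion order on approximation pairs. -/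
def rle {U : Type*} (p q : Set U × Set U) : Prop :=
  p.1 ⊆ q.1 ∧ p.2 ⊆ q.2

/-- Componentwise intersection (the meet `∇` on approximation pairs). -/
def pmeet {U : Type*} (p q : Set U × Set U) : Set U × Set U :=
  (p.1 ∩ q.1, p.2 ∩ q.2)

/-- Componentwise union (the join `Δ` on approximation pairs). -/
def pjoin {U : Type*} (p q : Set U × Set U) : Set U × Set U :=
  (p.1 ∪ q.1, p.2 ∪ q.2)

/-- `RS(W)` is the relative pseudocomplement of `RS(X)` with respect to `RS(Y)`. -/
def IsRelPC {U : Type*} (R : Setoid U) (X Y W : Set U) : Prop :=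
  lowerApprox R W ∩ lowerApprox R X ⊆ lowerApprox R Y ∧
  upperApprox R W ∩ upperApprox R X ⊆ upperApprox R Y ∧
  ∀ K : Set U, lowerApprox R K ∩ lowerApprox R X ⊆ lowerApprox R Y →
    upperApprox R K ∩ upperApprox R X ⊆ upperApprox R Y →
    lowerApprox R K ⊆ lowerApprox R W ∧ upperApprox R K ⊆ upperApprox R W

/-- `RS(V)` is the dual relative pseudocomplement of `RS(X)` with respect to `RS(Y)`. -/
def IsDualRelPC {U : Type*} (R : Setoid U) (X Y V : Set U) : Prop :=
  lowerApprox R X ⊆ lowerApprox R Y ∪ lowerApprox R V ∧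
  upperApprox R X ⊆ upperApprox R Y ∪ upperApprox R V ∧
  ∀ K : Set U, lowerApprox R X ⊆ lowerApprox R Y ∪ lowerApprox R K →
    upperApprox R X ⊆ upperApprox R Y ∪ upperApprox R K →
    lowerApprox R V ⊆ lowerApprox R K ∧ upperApprox R V ⊆ upperApprox R K

section Aux
variable {U : Type*} (R : Setoid U)

/-- canonical representative of the class of `x` -/
noncomputable def repOf (x : U) : U := (Quotient.mk R x).out

lemma rel_repOf (x : U) : R.r x (repOf R x) :=
  Quotient.exact (Quotient.out_eq (Quotient.mk R x)).symm

lemma repOf_eq_of_rel {x y : U} (h : R.r x y) : repOf R x = repOf R y := by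
  unfold repOf; congr 1; exact Quotient.sound h

lemma lower_saturated {X : Set U} {x y : U} (hx : x ∈ lowerApprox R X)
    (h : R.r x y) : y ∈ lowerApprox R X := by
  intro z hz
  exact hx (R.iseqv.trans h hz)

lemma upper_saturated {X : Set U} {x y : U} (hx : x ∈ upperApprox R X)
    (h : R.r x y) : y ∈ upperApprox R X := by
  intro he
  apply hx
  ext z
  simp only [Set.mem_inter_iff, Set.mem_setOf_eq, Set.mem_empty_iff_false, iff_false, not_and]
  intro hz hzX
  have : z ∈ ({w | R.r y w} ∩ X) := ⟨R.iseqv.trans (R.iseqv.symm h) hz, hzX⟩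
  rw [he] at this
  exact this

lemma exists_join (X Y : Set U) :
    ∃ Z : Set U, lowerApprox R Z = lowerApprox R X ∪ lowerApprox R Y ∧
      upperApprox R Z = upperApprox R X ∪ upperApprox R Y := by
  classical
  set A := lowerApprox R X ∪ lowerApprox R Y with hA
  set B := upperApprox R X ∪ upperApprox R Y with hB
  have hAsat : ∀ {x y}, x ∈ A → R.r x y → y ∈ A := by
    rintro x y (h | h) hr
    · exact Or.inl (lower_saturated R h hr)
    · exact Or.inr (lower_saturated R h hr)
  have hBsat : ∀ {x y}, x ∈ B → R.r x y → y ∈ B := by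
    rintro x y (h | h) hr
    · exact Or.inl (upper_saturated R h hr)
    · exact Or.inr (upper_saturated R h hr)
  refine ⟨A ∪ {x | x ∈ B ∧ x ∉ A ∧ repOf R x = x}, ?_, ?_⟩
  · apply Set.Subset.antisymm
    · intro a ha
      by_contra haA
      have haZ : a ∈ A ∪ {x | x ∈ B ∧ x ∉ A ∧ repOf R x = x} := ha (R.iseqv.refl a)
      have haB : a ∈ B := by
        rcases haZ with h | h
        · exact absurd h haA
        · exact h.1
      -- all elements of the class of a are not in A
      have hclassA : ∀ {y}, R.r a y → y ∉ A := by
        intro y hy hyA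
        exact haA (hAsat hyA (R.iseqv.symm hy))
      -- every element of the class is a fixed point of repOf, hence the class is a singleton
      have hfix : ∀ {y}, R.r a y → y = a := by
        intro y hy
        have hyZ := ha hy
        have hyA := hclassA hy
        have hyrep : repOf R y = y := by
          rcases hyZ with h | h
          · exact absurd h hyA
          · exact h.2.2
        have harep : repOf R a = a := by
          have haZ2 := ha (R.iseqv.refl a)
          rcases haZ2 with h | h
          · exact absurd h haA
          · exact h.2.2
        calc y = repOf R y := hyrep.symm
          _ = repOf R a := (repOf_eq_of_rel R hy).symm
          _ = a := harep
      -- so the class of a is {a}; since a ∈ B, a ∈ X or a ∈ Y, contradicting a ∉ A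
      have key : ∀ {W : Set U}, a ∈ upperApprox R W → a ∈ lowerApprox R W := by
        intro W hW
        have hne : ({y | R.r a y} ∩ W).Nonempty := Set.nonempty_iff_ne_empty.mpr hW
        obtain ⟨b, hbr, hbW⟩ := hne
        have : b = a := hfix hbr
        subst this
        intro y hy
        rw [hfix hy]
        exact hbW
      rcases haB with h | h
      · exact haA (Or.inl (key h))
      · exact haA (Or.inr (key h))
    · intro a ha
      intro y hy
      exact Or.inl (hAsat ha hy)
  · apply Set.Subset.antisymm
    · intro a ha
      have hne : ({y | R.r a y} ∩ (A ∪ {x | x ∈ B ∧ x ∉ A ∧ repOf R x = x})).Nonempty :=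
        Set.nonempty_iff_ne_empty.mpr ha
      obtain ⟨b, hbr, hbZ⟩ := hne
      rcases hbZ with hbA | hbB
      · rcases hbA with h | h
        · left
          apply upper_saturated R _ (R.iseqv.symm hbr)
          intro he
          have : b ∈ ({y | R.r b y} ∩ X) := ⟨R.iseqv.refl b, h (R.iseqv.refl b)⟩
          rw [he] at this; exact this
        · right
          apply upper_saturated R _ (R.iseqv.symm hbr)
          intro he
          have : b ∈ ({y | R.r b y} ∩ Y) := ⟨R.iseqv.refl b, h (R.iseqv.refl b)⟩
          rw [he] at this; exact this
      · exact hBsat hbB.1 (R.iseqv.symm hbr)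
    · intro a haB
      intro he
      by_cases haA : a ∈ A
      · have : a ∈ ({y | R.r a y} ∩ (A ∪ {x | x ∈ B ∧ x ∉ A ∧ repOf R x = x})) :=
          ⟨R.iseqv.refl a, Or.inl haA⟩
        rw [he] at this; exact this
      · have hr := rel_repOf R a
        have : repOf R a ∈ ({y | R.r a y} ∩ (A ∪ {x | x ∈ B ∧ x ∉ A ∧ repOf R x = x})) := by
          refine ⟨hr, Or.inr ⟨hBsat haB hr, fun h => haA (hAsat h (R.iseqv.symm hr)), ?_⟩⟩
          exact (repOf_eq_of_rel R hr).symm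
        rw [he] at this; exact this

end Aux

theorem rough_join_lub {U : Type*} [Fintype U] [Nonempty U] (R : Setoid U)
    (X Y : Set U) :
    (∃ Z : Set U, lowerApprox R Z = lowerApprox R X ∪ lowerApprox R Y ∧
      upperApprox R Z = upperApprox R X ∪ upperApprox R Y) ∧
    (lowerApprox R X ∪ lowerApprox R Y, upperApprox R X ∪ upperApprox R Y) ∈ RoughT R ∧
    rle (RS R X) (lowerApprox R X ∪ lowerApprox R Y, upperApprox R X ∪ upperApprox R Y) ∧
    rle (RS R Y) (lowerApprox R X ∪ lowerApprox R Y, upperApprox R X ∪ upperApprox R Y) ∧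
    ∀ q ∈ RoughT R, rle (RS R X) q → rle (RS R Y) q →
      rle (lowerApprox R X ∪ lowerApprox R Y, upperApprox R X ∪ upperApprox R Y) q := by
  obtain ⟨Z, hZl, hZu⟩ := exists_join R X Y
  refine ⟨⟨Z, hZl, hZu⟩, ⟨Z, by rw [RS, hZl, hZu]⟩, ⟨Set.subset_union_left, Set.subset_union_left⟩,
    ⟨Set.subset_union_right, Set.subset_union_right⟩, ?_⟩
  rintro q ⟨W, rfl⟩ ⟨hX1, hX2⟩ ⟨hY1, hY2⟩
  exact ⟨Set.union_subset hX1 hY1, Set.union_subset hX2 hY2⟩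
end

section
/- (dual Rough Heyting algebra) For every pair of subsets Y, Z of U there exists V ⊆ U such that R₋(Y) ⊆ R₋(Z) ∪ R₋(V) and R⁻(Y) ⊆ R⁻(Z) ∪ R⁻(V), and RS(V) is the least such element of T: for every K ⊆ U with R₋(Y) ⊆ R₋(Z) ∪ R₋(K) and R⁻(Y) ⊆ R⁻(Z) ∪ R⁻(K), one has R₋(V) ⊆ R₋(K) and R⁻(V) ⊆ R⁻(K). Hence every pair of elements of T has a (unique) dual relative pseudocomplement. -/
private lemma class_eq {U : Type*} (R : Setoid U) {x y : U} (h : R.r x y) :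
    {z | R.r x z} = {z | R.r y z} := by
  ext z; exact ⟨fun hz => R.trans (R.symm h) hz, fun hz => R.trans h hz⟩

private lemma mem_lower_congr {U : Type*} (R : Setoid U) {x y : U} (h : R.r x y)
    (S : Set U) (hx : x ∈ lowerApprox R S) : y ∈ lowerApprox R S := by
  simpa [lowerApprox, class_eq R h] using hx

private lemma mem_upper_congr {U : Type*} (R : Setoid U) {x y : U} (h : R.r x y)
    (S : Set U) (hx : x ∈ upperApprox R S) : y ∈ upperApprox R S := by
  simpa [upperApprox, class_eq R h] using hx

private lemma lower_subset {U : Type*} (R : Setoid U) (S : Set U) :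
    lowerApprox R S ⊆ S := fun x hx => hx (R.refl x)

theorem rough_dual_heyting {U : Type*} [Fintype U] [Nonempty U] (R : Setoid U)
    (Y Z : Set U) :
    ∃ V : Set U,
      lowerApprox R Y ⊆ lowerApprox R Z ∪ lowerApprox R V ∧
      upperApprox R Y ⊆ upperApprox R Z ∪ upperApprox R V ∧
      ∀ K : Set U, lowerApprox R Y ⊆ lowerApprox R Z ∪ lowerApprox R K →
        upperApprox R Y ⊆ upperApprox R Z ∪ upperApprox R K →
        lowerApprox R V ⊆ lowerApprox R K ∧ upperApprox R V ⊆ upperApprox R K := by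
  classical
  set A : Set U := lowerApprox R Y \ lowerApprox R Z with hA
  set B : Set U := upperApprox R Y \ upperApprox R Z with hB
  set Reps : Set U := {x | x ∈ B ∧ (Quotient.mk R x).out = x} with hReps
  refine ⟨A ∪ Reps, ?_, ?_, ?_⟩
  · intro x hx
    by_cases hz : x ∈ lowerApprox R Z
    · exact Or.inl hz
    · refine Or.inr ?_
      intro y hy
      exact Or.inl ⟨mem_lower_congr R hy Y hx, fun hc => hz (mem_lower_congr R (R.symm hy) Z hc)⟩
  · intro x hx
    by_cases hz : x ∈ upperApprox R Z
    · exact Or.inl hz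
    · refine Or.inr ?_
      have hrel : R.r x (Quotient.mk R x).out := Quotient.exact (Quotient.out_eq _).symm
      have hmem : (Quotient.mk R x).out ∈ Reps := by
        refine ⟨⟨mem_upper_congr R hrel Y hx, fun hc => hz (mem_upper_congr R (R.symm hrel) Z hc)⟩, ?_⟩
        congr 1
        exact Quotient.sound (R.symm hrel)
      intro hemp
      exact (Set.eq_empty_iff_forall_notMem.mp hemp) (Quotient.mk R x).out
        ⟨hrel, Or.inr hmem⟩
  · intro K hK1 hK2
    constructor
    · intro x hx
      by_cases hxA : x ∈ A
      · rcases hK1 hxA.1 with h | h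
        · exact absurd h hxA.2
        · exact h
      · -- class of x is contained in Reps, hence a singleton {x}
        have hxV : {y | R.r x y} ⊆ A ∪ Reps := hx
        have hxR : x ∈ Reps := by
          rcases hxV (R.refl x) with h | h
          · exact absurd h hxA
          · exact h
        have hsing : ∀ y, R.r x y → y = x := by
          intro y hy
          rcases hxV hy with h | h
          · exact absurd ⟨mem_lower_congr R (R.symm hy) Y h.1,
              fun hc => h.2 (mem_lower_congr R hy Z hc)⟩ hxA
          · calc y = (Quotient.mk R y).out := h.2.symm
              _ = (Quotient.mk R x).out := by congr 1; exact Quotient.sound (R.symm hy)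
              _ = x := hxR.2
        -- x ∈ B, so x ∈ upperApprox K, and the class is {x}, so x ∈ K
        have hxB : x ∈ B := hxR.1
        rcases hK2 hxB.1 with h | h
        · exact absurd h hxB.2
        · have hne := h
          replace hne := Set.nonempty_iff_ne_empty.mpr hne
          obtain ⟨y, hy1, hy2⟩ := hne
          have := hsing y hy1
          subst this
          intro z hz
          have := hsing z hz
          subst this
          exact hy2
    · intro x hx
      have hne := hx
      replace hne := Set.nonempty_iff_ne_empty.mpr hne
      obtain ⟨y, hy1, hy2⟩ := hne
      rcases hy2 with h | h
      ·
        rcases hK1 h.1 with h2 | h2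
        · exact absurd h2 h.2
        · intro hemp
          exact Set.eq_empty_iff_forall_notMem.mp hemp y ⟨hy1, lower_subset R K h2⟩
      · -- y ∈ Reps ⊆ B ⊆ upperApprox K
        rcases hK2 h.1.1 with h2 | h2
        · exact absurd h2 h.1.2
        · exact mem_upper_congr R (R.symm hy1) K h2
end
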